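/- Let h > 0 and k ≥ 1 be real numbers. The k-expansion map Φ_{k,h} contracts distances along horocycles centered at ∞: for all z, w ∈ B_h with Im z = Im w, one has dist(Φ_{k,h}(z), Φ_{k,h}(w)) = 2·arsinh(|Re z − Re w| / (2·h·(Im z / h)^k)) ≤ dist(z, w). -/

import Mathlib

open UpperHalfPlane Real

/-- The `k`-expansion map `Φ_{k,h}` of the horoball `B_h = {z ∈ ℍ : h ≤ Im z}`:
`Φ_{k,h}(z) = Re z + i·h·(Im z / h)^k`. -/
noncomputable def expMap (k h : ℝ) (hh : 0 < h) (z : UpperHalfPlane) : UpperHalfPlane :=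
  ⟨⟨z.re, h * (z.im / h) ^ k⟩, by
    simpa using mul_pos hh (Real.rpow_pos_of_pos (div_pos z.im_pos hh) k)⟩

/-! Along a horocycle `Im = y` the hyperbolic distance is `2 arsinh (|Δ Re| / (2 y))`, which
decreases in `y`. The map `Φ_{k,h}` keeps real parts and, since `(y / h) ^ k ≥ y / h` for
`y ≥ h` and `k ≥ 1`, raises the height of the horocycle. -/

namespace UpperHalfPlane

theorem dist_of_im_eq {z w : ℍ} (h : z.im = w.im) :
    dist z w = 2 * arsinh (|z.re - w.re| / (2 * z.im)) := by
  rw [dist_eq, Complex.dist_of_im_eq (by simpa using h), ← h, sqrt_mul_self z.im_pos.le,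
    Real.dist_eq, coe_re, coe_re]

end UpperHalfPlane

section expMap

variable {k h : ℝ} (hh : 0 < h) (z : ℍ)

@[simp]
theorem expMap_re : (expMap k h hh z).re = z.re := rfl

@[simp]
theorem expMap_im : (expMap k h hh z).im = h * (z.im / h) ^ k := rfl

theorem im_le_expMap_im (hk : 1 ≤ k) (hz : h ≤ z.im) : z.im ≤ (expMap k h hh z).im := by
  have hratio : 1 ≤ z.im / h := (one_le_div hh).mpr hz
  calc z.im = h * (z.im / h) ^ (1 : ℝ) := by rw [rpow_one]; field_simp
    _ ≤ h * (z.im / h) ^ k := by gcongr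
    _ = (expMap k h hh z).im := rfl

end expMap

theorem expMap_contracts_horocycles_general (h k : ℝ) (hh : 0 < h) (hk : 1 ≤ k)
    (z w : UpperHalfPlane) (hz : h ≤ z.im) (him : z.im = w.im) :
    dist (expMap k h hh z) (expMap k h hh w)
      = 2 * Real.arsinh (|z.re - w.re| / (2 * (h * (z.im / h) ^ k))) ∧
    dist (expMap k h hh z) (expMap k h hh w) ≤ dist z w := by
  have hdist : dist (expMap k h hh z) (expMap k h hh w)
      = 2 * arsinh (|z.re - w.re| / (2 * (h * (z.im / h) ^ k))) := by
    rw [dist_of_im_eq (by simp [him])]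
    simp
  refine ⟨hdist, ?_⟩
  rw [hdist, dist_of_im_eq him, ← expMap_im hh]
  gcongr
  exact im_le_expMap_im hh z hk hz

/-- For `h > 0`, `k ≥ 1`, the `k`-expansion map contracts distances along horocycles centered
at `∞`: for `z, w ∈ B_h` with `Im z = Im w`,
`dist (Φ z) (Φ w) = 2·arsinh (|Re z − Re w| / (2·h·(Im z / h)^k)) ≤ dist z w`. -/
theorem expMap_contracts_horocycles (h k : ℝ) (hh : 0 < h) (hk : 1 ≤ k)
    (z w : UpperHalfPlane) (hz : h ≤ z.im) (hw : h ≤ w.im) (him : z.im = w.im) :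
    dist (expMap k h hh z) (expMap k h hh w)
      = 2 * Real.arsinh (|z.re - w.re| / (2 * (h * (z.im / h) ^ k))) ∧
    dist (expMap k h hh z) (expMap k h hh w) ≤ dist z w :=
  expMap_contracts_horocycles_general h k hh hk z w hz him
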